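/- Suppose θ has an observable conservative realization on complex Hilbert spaces, i.e. a system Σ₁ = (A₁,B₁,C₁,D; X₁,U,Y) whose system operator is unitary and whose observable subspace equals X₁. Then every controllable passive realization Σ = (A,B,C,D; X,U,Y) of θ (same feedthrough D and same moments C∘Aⁿ∘B = C₁∘A₁ⁿ∘B₁ for all n ≥ 0) is isometric (its system operator T satisfies T*∘T = I) and minimal. -/

import Mathlib

/-!
STATEMENT 18: If θ has an observable conservative realization Σ₁ (system operator
unitary, observable subspace equal to the whole state space), then every
controllable passive realization Σ of θ is isometric (T*∘T = I) and minimal.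
-/

noncomputable section

open ContinuousLinearMap

variable {X X₁ U Y : Type*}
  [NormedAddCommGroup X] [InnerProductSpace ℂ X] [CompleteSpace X]
  [NormedAddCommGroup X₁] [InnerProductSpace ℂ X₁] [CompleteSpace X₁]
  [NormedAddCommGroup U] [InnerProductSpace ℂ U] [CompleteSpace U]
  [NormedAddCommGroup Y] [InnerProductSpace ℂ Y] [CompleteSpace Y]

/-- The system operator `T(x,u) = (Ax + Bu, Cx + Du)` as a block operator between the
Hilbert space direct sums. -/
def sysOp {W : Type*} [NormedAddCommGroup W] [InnerProductSpace ℂ W] [CompleteSpace W]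
    (A : W →L[ℂ] W) (B : U →L[ℂ] W) (C : W →L[ℂ] Y) (D : U →L[ℂ] Y) :
    WithLp 2 (W × U) →L[ℂ] WithLp 2 (W × Y) :=
  (((WithLp.prodContinuousLinearEquiv 2 ℂ W Y).symm : (W × Y) →L[ℂ] WithLp 2 (W × Y)).comp
      ((A.comp (fst ℂ W U) + B.comp (snd ℂ W U)).prod
        (C.comp (fst ℂ W U) + D.comp (snd ℂ W U)))).comp
    ((WithLp.prodContinuousLinearEquiv 2 ℂ W U : WithLp 2 (W × U) →L[ℂ] (W × U)))

/-- The controllable subspace `X^c` of the system. -/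
def contSub {W : Type*} [NormedAddCommGroup W] [InnerProductSpace ℂ W] [CompleteSpace W]
    (A : W →L[ℂ] W) (B : U →L[ℂ] W) : Submodule ℂ W :=
  (Submodule.span ℂ (⋃ n : ℕ, Set.range fun u : U => (A ^ n) (B u))).topologicalClosure

/-- The observable subspace `X^o` of the system. -/
def obsSub {W : Type*} [NormedAddCommGroup W] [InnerProductSpace ℂ W] [CompleteSpace W]
    (A : W →L[ℂ] W) (C : W →L[ℂ] Y) : Submodule ℂ W :=
  (Submodule.span ℂ (⋃ n : ℕ, Set.range fun y : Y =>
    ((ContinuousLinearMap.adjoint A) ^ n) ((ContinuousLinearMap.adjoint C) y))).topologicalClosure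

/-!
Feed the same finitely supported input into both systems, starting from the zero state. Equal
moments give equal outputs, so by the energy balance the passive system stores at most as much
energy as the isometric one: `‖x‖ ≤ ‖x₁‖` for the reached states. Since `T₁` is unitary, the dual
system of `Σ₁` is isometric too, and the same estimate for the dual systems, paired with the dual
reachable states (dense in `X₁` by observability), gives `‖x₁‖ ≤ ‖x‖`. So `x ↦ x₁` is an isometry
on the reachable states, which are dense by controllability; its extension `V : X → X₁` satisfies
`V A = A₁ V`, `V B = B₁`, `C₁ V = C`. Then `T` is isometric because `T₁` is, and `Σ` is observable
because `Σ₁` is.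
-/

section Reachability

variable {E E₁ F G : Type*}
  [NormedAddCommGroup E] [NormedSpace ℂ E] [NormedAddCommGroup E₁] [NormedSpace ℂ E₁]
  [NormedAddCommGroup F] [NormedSpace ℂ F] [NormedAddCommGroup G] [NormedSpace ℂ G]

-- `f k` is the input fed in `k` steps before the present, starting from the zero state.
def reach (A : E →L[ℂ] E) (B : F →L[ℂ] E) : (ℕ →₀ F) →ₗ[ℂ] E :=
  Finsupp.lsum ℂ fun k => ((A ^ k).comp B : F →ₗ[ℂ] E)

variable {A : E →L[ℂ] E} {B : F →L[ℂ] E} {C : E →L[ℂ] G}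
  {A₁ : E₁ →L[ℂ] E₁} {B₁ : F →L[ℂ] E₁} {C₁ : E₁ →L[ℂ] G} {D : F →L[ℂ] G}

theorem reach_apply (f : ℕ →₀ F) : reach A B f = f.sum fun k u => (A ^ k) (B u) := rfl

theorem reach_single (k : ℕ) (u : F) : reach A B (Finsupp.single k u) = (A ^ k) (B u) :=
  Finsupp.lsum_single ℂ _ k u

theorem reach_eq_sum_range {f : ℕ →₀ F} {n : ℕ} (hf : f.support ⊆ Finset.range n) :
    reach A B f = ∑ k ∈ Finset.range n, (A ^ k) (B (f k)) :=
  Finsupp.sum_of_support_subset f hf _ (by simp)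

theorem reach_mapDomain_succ (f : ℕ →₀ F) :
    reach A B (Finsupp.mapDomain Nat.succ f) = A (reach A B f) := by
  rw [reach_apply, Finsupp.sum_mapDomain_index (by simp) (by simp [map_add]), reach_apply,
    Finsupp.sum, Finsupp.sum, map_sum]
  simp only [pow_succ', mul_apply_eq_comp]

theorem span_le_range_reach :
    Submodule.span ℂ (⋃ n : ℕ, Set.range fun u : F => (A ^ n) (B u))
      ≤ LinearMap.range (reach A B) := by
  simp only [Submodule.span_le, Set.iUnion_subset_iff, Set.range_subset_iff]
  exact fun n u => ⟨Finsupp.single n u, reach_single n u⟩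

theorem output_sum_range_eq
    (hmom : ∀ n : ℕ, C.comp ((A ^ n).comp B) = C₁.comp ((A₁ ^ n).comp B₁)) (j n : ℕ) (f : ℕ → F) :
    C ((A ^ j) (∑ k ∈ Finset.range n, (A ^ k) (B (f k))))
      = C₁ ((A₁ ^ j) (∑ k ∈ Finset.range n, (A₁ ^ k) (B₁ (f k)))) := by
  simp only [map_sum, ← mul_apply_eq_comp, ← pow_add]
  exact Finset.sum_congr rfl fun k _ => congr($(hmom (j + k)) (f k))

theorem sum_range_succ_pow_apply (A : E →L[ℂ] E) (B : F →L[ℂ] E) (n : ℕ) (f : ℕ → F) :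
    ∑ k ∈ Finset.range (n + 1), (A ^ k) (B (f k))
      = A (∑ k ∈ Finset.range n, (A ^ k) (B (f (k + 1)))) + B (f 0) := by
  simp only [Finset.sum_range_succ', map_sum, pow_succ', mul_apply_eq_comp, pow_zero,
    one_apply_eq_self]

theorem norm_sum_range_le_of_passive_of_isometric
    (hmom : ∀ n : ℕ, C.comp ((A ^ n).comp B) = C₁.comp ((A₁ ^ n).comp B₁))
    (hpass : ∀ x u, ‖A x + B u‖ ^ 2 + ‖C x + D u‖ ^ 2 ≤ ‖x‖ ^ 2 + ‖u‖ ^ 2)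
    (hiso : ∀ x u, ‖A₁ x + B₁ u‖ ^ 2 + ‖C₁ x + D u‖ ^ 2 = ‖x‖ ^ 2 + ‖u‖ ^ 2)
    (n : ℕ) (f : ℕ → F) :
    ‖∑ k ∈ Finset.range n, (A ^ k) (B (f k))‖ ≤ ‖∑ k ∈ Finset.range n, (A₁ ^ k) (B₁ (f k))‖ := by
  induction n generalizing f with
  | zero => simp
  | succ n ih =>
    rw [sum_range_succ_pow_apply, sum_range_succ_pow_apply, ← sq_le_sq₀ (norm_nonneg _)
      (norm_nonneg _)]
    set x := ∑ k ∈ Finset.range n, (A ^ k) (B (f (k + 1)))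
    set x₁ := ∑ k ∈ Finset.range n, (A₁ ^ k) (B₁ (f (k + 1)))
    have hout : C x = C₁ x₁ := by
      simpa only [pow_zero, one_apply_eq_self] using
        output_sum_range_eq hmom 0 n (fun k => f (k + 1))
    have hx : ‖x‖ ^ 2 ≤ ‖x₁‖ ^ 2 := by gcongr; exact ih _
    have hstep := hpass x (f 0)
    rw [hout] at hstep
    linarith [hiso x₁ (f 0)]

theorem norm_reach_le_of_passive_of_isometric
    (hmom : ∀ n : ℕ, C.comp ((A ^ n).comp B) = C₁.comp ((A₁ ^ n).comp B₁))
    (hpass : ∀ x u, ‖A x + B u‖ ^ 2 + ‖C x + D u‖ ^ 2 ≤ ‖x‖ ^ 2 + ‖u‖ ^ 2)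
    (hiso : ∀ x u, ‖A₁ x + B₁ u‖ ^ 2 + ‖C₁ x + D u‖ ^ 2 = ‖x‖ ^ 2 + ‖u‖ ^ 2)
    (f : ℕ →₀ F) : ‖reach A B f‖ ≤ ‖reach A₁ B₁ f‖ := by
  obtain ⟨n, hn⟩ := f.support.exists_nat_subset_range
  rw [reach_eq_sum_range hn, reach_eq_sum_range hn]
  exact norm_sum_range_le_of_passive_of_isometric hmom hpass hiso n f

theorem output_reach_eq (hmom : ∀ n : ℕ, C.comp ((A ^ n).comp B) = C₁.comp ((A₁ ^ n).comp B₁))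
    (j : ℕ) (f : ℕ →₀ F) : C ((A ^ j) (reach A B f)) = C₁ ((A₁ ^ j) (reach A₁ B₁ f)) := by
  obtain ⟨n, hn⟩ := f.support.exists_nat_subset_range
  rw [reach_eq_sum_range hn, reach_eq_sum_range hn]
  exact output_sum_range_eq hmom j n f

theorem exists_linearIsometry_intertwining [CompleteSpace E₁]
    (hmom : ∀ n : ℕ, C.comp ((A ^ n).comp B) = C₁.comp ((A₁ ^ n).comp B₁))
    (hdense : DenseRange (reach A B)) (hnorm : ∀ f, ‖reach A B f‖ = ‖reach A₁ B₁ f‖) :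
    ∃ V : E →ₗᵢ[ℂ] E₁, (∀ x, V (A x) = A₁ (V x)) ∧ (∀ u, V (B u) = B₁ u) ∧
      ∀ x, C₁ (V x) = C x := by
  set W := (reach A₁ B₁).extendOfNorm (reach A B)
  have hW : ∀ f, W (reach A B f) = reach A₁ B₁ f :=
    LinearMap.extendOfNorm_eq hdense ⟨1, fun f => by rw [one_mul, hnorm]⟩
  have hWnorm : ∀ x, ‖W x‖ = ‖x‖ := fun x =>
    hdense.induction_on x (isClosed_eq (by fun_prop) continuous_norm)
      fun f => by rw [hW, hnorm]
  refine ⟨⟨W.toLinearMap, hWnorm⟩, fun x => ?_, fun u => ?_, fun x => ?_⟩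
  · refine congrFun (hdense.equalizer (g := W ∘ A) (h := A₁ ∘ W) (by fun_prop) (by fun_prop)
      (funext fun f => ?_)) x
    simp only [Function.comp_apply, ← reach_mapDomain_succ, hW]
  · show W (B u) = B₁ u
    simpa only [reach_single, pow_zero, one_apply_eq_self] using hW (Finsupp.single 0 u)
  · refine congrFun (hdense.equalizer (g := C₁ ∘ W) (h := C) (by fun_prop) (by fun_prop)
      (funext fun f => ?_)) x
    simpa only [Function.comp_apply, hW, pow_zero, one_apply_eq_self] using
      (output_reach_eq hmom 0 f).symm

end Reachability

theorem norm_le_of_denseRange_inner_le {𝕜 H M : Type*} [RCLike 𝕜] [NormedAddCommGroup H]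
    [InnerProductSpace 𝕜 H] {φ : M → H} (hφ : DenseRange φ) {x : H}
    {c : ℝ} (hc : 0 ≤ c) (h : ∀ m, ‖inner 𝕜 x (φ m)‖ ≤ c * ‖φ m‖) : ‖x‖ ≤ c := by
  have hall : ∀ p, ‖inner 𝕜 x p‖ ≤ c * ‖p‖ := fun p =>
    hφ.induction_on p (isClosed_le (by fun_prop) (by fun_prop)) h
  have hx := hall x
  rw [inner_self_eq_norm_sq_to_K, norm_pow, RCLike.norm_ofReal, abs_norm] at hx
  nlinarith [norm_nonneg x]

section Hilbert

variable {E E₁ F G : Type*}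
  [NormedAddCommGroup E] [InnerProductSpace ℂ E] [CompleteSpace E]
  [NormedAddCommGroup E₁] [InnerProductSpace ℂ E₁] [CompleteSpace E₁]
  [NormedAddCommGroup F] [InnerProductSpace ℂ F] [NormedAddCommGroup G] [InnerProductSpace ℂ G]

theorem adjoint_pow (A : E →L[ℂ] E) (n : ℕ) : adjoint (A ^ n) = adjoint A ^ n := by
  rw [← star_eq_adjoint, ← star_eq_adjoint, star_pow]

theorem norm_sysOp_apply_sq (A : E →L[ℂ] E) (B : F →L[ℂ] E) (C : E →L[ℂ] G) (D : F →L[ℂ] G)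
    (v : WithLp 2 (E × F)) :
    ‖sysOp A B C D v‖ ^ 2 = ‖A v.fst + B v.snd‖ ^ 2 + ‖C v.fst + D v.snd‖ ^ 2 :=
  WithLp.prod_norm_sq_eq_of_L2 _

theorem adjoint_sysOp [CompleteSpace F] [CompleteSpace G] (A : E →L[ℂ] E) (B : F →L[ℂ] E)
    (C : E →L[ℂ] G) (D : F →L[ℂ] G) :
    adjoint (sysOp A B C D) = sysOp (adjoint A) (adjoint C) (adjoint B) (adjoint D) := by
  refine ((eq_adjoint_iff _ _).mpr fun v w => ?_).symm
  change inner ℂ (adjoint A v.fst + adjoint C v.snd) w.fst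
      + inner ℂ (adjoint B v.fst + adjoint D v.snd) w.snd
    = inner ℂ v.fst (A w.fst + B w.snd) + inner ℂ v.snd (C w.fst + D w.snd)
  simp only [inner_add_left, inner_add_right, adjoint_inner_left]
  ring

theorem energy_le_of_norm_sysOp_le_one {A : E →L[ℂ] E} {B : F →L[ℂ] E} {C : E →L[ℂ] G}
    {D : F →L[ℂ] G} (h : ‖sysOp A B C D‖ ≤ 1) (x : E) (u : F) :
    ‖A x + B u‖ ^ 2 + ‖C x + D u‖ ^ 2 ≤ ‖x‖ ^ 2 + ‖u‖ ^ 2 := by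
  have hle := (sysOp A B C D).le_of_opNorm_le h (WithLp.toLp 2 (x, u))
  rw [one_mul, ← sq_le_sq₀ (norm_nonneg _) (norm_nonneg _), norm_sysOp_apply_sq,
    WithLp.prod_norm_sq_eq_of_L2] at hle
  exact hle

theorem energy_eq_of_norm_sysOp_apply {A : E →L[ℂ] E} {B : F →L[ℂ] E} {C : E →L[ℂ] G}
    {D : F →L[ℂ] G} (h : ∀ v, ‖sysOp A B C D v‖ = ‖v‖) (x : E) (u : F) :
    ‖A x + B u‖ ^ 2 + ‖C x + D u‖ ^ 2 = ‖x‖ ^ 2 + ‖u‖ ^ 2 := by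
  have heq := congrArg (· ^ 2) (h (WithLp.toLp 2 (x, u)))
  simp only [WithLp.prod_norm_sq_eq_of_L2] at heq
  exact heq

theorem obsSub_eq_top_iff [CompleteSpace G] (A : E →L[ℂ] E) (C : E →L[ℂ] G) :
    obsSub A C = ⊤ ↔ ∀ x, (∀ n, C ((A ^ n) x) = 0) → x = 0 := by
  rw [obsSub, Submodule.topologicalClosure_eq_top_iff, Submodule.eq_bot_iff]
  refine forall_congr' fun x => imp_congr_left ?_
  rw [Submodule.mem_orthogonal']
  change Submodule.span ℂ _ ≤ LinearMap.ker (innerₛₗ ℂ x) ↔ _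
  simp only [Submodule.span_le, Set.iUnion_subset_iff, Set.range_subset_iff, SetLike.mem_coe,
    LinearMap.mem_ker, innerₛₗ_apply_apply, ← adjoint_pow, adjoint_inner_right]
  exact forall_congr' fun n =>
    ⟨fun h => inner_self_eq_zero.mp (h _), fun h y => by rw [h, inner_zero_left]⟩

theorem denseRange_reach {A : E →L[ℂ] E} {B : F →L[ℂ] E} (h : contSub A B = ⊤) :
    DenseRange (reach A B) := by
  rw [DenseRange, ← LinearMap.coe_range, Submodule.dense_iff_topologicalClosure_eq_top,
    eq_top_iff, ← h]
  exact Submodule.topologicalClosure_mono span_le_range_reach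

theorem inner_reach_adjoint [CompleteSpace G] (A : E →L[ℂ] E) (C : E →L[ℂ] G) (x : E)
    (g : ℕ →₀ G) :
    inner ℂ x (reach (adjoint A) (adjoint C) g) = g.sum fun j y => inner ℂ (C ((A ^ j) x)) y := by
  rw [reach_apply, Finsupp.inner_sum]
  simp only [← adjoint_pow, adjoint_inner_right]

end Hilbert

section Realizations

variable {E E₁ F G : Type*}
  [NormedAddCommGroup E] [InnerProductSpace ℂ E] [CompleteSpace E]
  [NormedAddCommGroup E₁] [InnerProductSpace ℂ E₁] [CompleteSpace E₁]
  [NormedAddCommGroup F] [InnerProductSpace ℂ F] [NormedAddCommGroup G] [InnerProductSpace ℂ G]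
  {A : E →L[ℂ] E} {B : F →L[ℂ] E} {C : E →L[ℂ] G}
  {A₁ : E₁ →L[ℂ] E₁} {B₁ : F →L[ℂ] E₁} {C₁ : E₁ →L[ℂ] G} {D : F →L[ℂ] G}

theorem norm_reach_eq_of_passive_of_conservative [CompleteSpace F] [CompleteSpace G]
    (hmom : ∀ n : ℕ, C.comp ((A ^ n).comp B) = C₁.comp ((A₁ ^ n).comp B₁))
    (hpass : ‖sysOp A B C D‖ ≤ 1) (hiso₁ : ∀ v, ‖sysOp A₁ B₁ C₁ D v‖ = ‖v‖)
    (hcoiso₁ : ∀ v, ‖adjoint (sysOp A₁ B₁ C₁ D) v‖ = ‖v‖) (hobs₁ : obsSub A₁ C₁ = ⊤)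
    (f : ℕ →₀ F) : ‖reach A B f‖ = ‖reach A₁ B₁ f‖ := by
  have hmom' : ∀ n : ℕ, (adjoint B).comp ((adjoint A ^ n).comp (adjoint C))
      = (adjoint B₁).comp ((adjoint A₁ ^ n).comp (adjoint C₁)) := fun n => by
    simpa only [adjoint_comp, adjoint_pow, comp_assoc] using congrArg adjoint (hmom n)
  -- The reverse inequality is the same energy estimate for the dual systems, tested against the
  -- dual reachable states, which are dense in `E₁` by observability of the first system.
  have hpass' : ‖sysOp (adjoint A) (adjoint C) (adjoint B) (adjoint D)‖ ≤ 1 := by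
    rwa [← adjoint_sysOp, LinearIsometryEquiv.norm_map]
  have hiso₁' := adjoint_sysOp A₁ B₁ C₁ D ▸ hcoiso₁
  refine le_antisymm (norm_reach_le_of_passive_of_isometric hmom
    (energy_le_of_norm_sysOp_le_one hpass) (energy_eq_of_norm_sysOp_apply hiso₁) f) ?_
  refine norm_le_of_denseRange_inner_le (𝕜 := ℂ) (denseRange_reach (A := adjoint A₁) hobs₁)
    (norm_nonneg _) fun g => ?_
  have hbridge : inner ℂ (reach A₁ B₁ f) (reach (adjoint A₁) (adjoint C₁) g)
      = inner ℂ (reach A B f) (reach (adjoint A) (adjoint C) g) := by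
    simp only [inner_reach_adjoint, output_reach_eq hmom]
  calc ‖inner ℂ (reach A₁ B₁ f) (reach (adjoint A₁) (adjoint C₁) g)‖
      = ‖inner ℂ (reach A B f) (reach (adjoint A) (adjoint C) g)‖ := by rw [hbridge]
    _ ≤ ‖reach A B f‖ * ‖reach (adjoint A) (adjoint C) g‖ := norm_inner_le_norm _ _
    _ ≤ ‖reach A B f‖ * ‖reach (adjoint A₁) (adjoint C₁) g‖ := by
      gcongr
      exact norm_reach_le_of_passive_of_isometric hmom' (energy_le_of_norm_sysOp_le_one hpass')
        (energy_eq_of_norm_sysOp_apply hiso₁') g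

theorem norm_sysOp_apply_of_intertwining (V : E →ₗᵢ[ℂ] E₁) (hA : ∀ x, V (A x) = A₁ (V x))
    (hB : ∀ u, V (B u) = B₁ u) (hC : ∀ x, C₁ (V x) = C x)
    (h₁ : ∀ v, ‖sysOp A₁ B₁ C₁ D v‖ = ‖v‖) (v : WithLp 2 (E × F)) :
    ‖sysOp A B C D v‖ = ‖v‖ := by
  rw [← sq_eq_sq₀ (norm_nonneg _) (norm_nonneg _), norm_sysOp_apply_sq,
    WithLp.prod_norm_sq_eq_of_L2]
  have h := energy_eq_of_norm_sysOp_apply h₁ (V v.fst) v.snd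
  rwa [← hA, ← hB, ← map_add, hC, V.norm_map, V.norm_map] at h

theorem obsSub_eq_top_of_intertwining [CompleteSpace G] (V : E →ₗᵢ[ℂ] E₁)
    (hA : ∀ x, V (A x) = A₁ (V x)) (hC : ∀ x, C₁ (V x) = C x) (h₁ : obsSub A₁ C₁ = ⊤) :
    obsSub A C = ⊤ := by
  have hpow : ∀ n x, V ((A ^ n) x) = (A₁ ^ n) (V x) := by
    intro n
    induction n with
    | zero => simp only [pow_zero, one_apply_eq_self, implies_true]
    | succ n ih =>
      intro x
      rw [pow_succ', pow_succ', mul_apply_eq_comp, mul_apply_eq_comp, hA, ih]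
  rw [obsSub_eq_top_iff] at h₁ ⊢
  exact fun x hx => (map_eq_zero_iff V V.injective).mp
    (h₁ (V x) fun n => by rw [← hpow, hC, hx])

end Realizations

theorem statement18
    (A₁ : X₁ →L[ℂ] X₁) (B₁ : U →L[ℂ] X₁) (C₁ : X₁ →L[ℂ] Y) (D : U →L[ℂ] Y)
    -- Σ₁ is conservative: its system operator is unitary
    (hcons₁ : (ContinuousLinearMap.adjoint (sysOp A₁ B₁ C₁ D)).comp (sysOp A₁ B₁ C₁ D)
        = ContinuousLinearMap.id ℂ (WithLp 2 (X₁ × U))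
      ∧ (sysOp A₁ B₁ C₁ D).comp (ContinuousLinearMap.adjoint (sysOp A₁ B₁ C₁ D))
        = ContinuousLinearMap.id ℂ (WithLp 2 (X₁ × Y)))
    -- Σ₁ is observable
    (hobs₁ : obsSub A₁ C₁ = ⊤)
    -- Σ is a controllable passive realization of the same transfer function θ
    (A : X →L[ℂ] X) (B : U →L[ℂ] X) (C : X →L[ℂ] Y)
    (hpass : ‖sysOp A B C D‖ ≤ 1)
    (hcont : contSub A B = ⊤)
    (hmom : ∀ n : ℕ, C.comp ((A ^ n).comp B) = C₁.comp ((A₁ ^ n).comp B₁)) :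
    (ContinuousLinearMap.adjoint (sysOp A B C D)).comp (sysOp A B C D)
        = ContinuousLinearMap.id ℂ (WithLp 2 (X × U))
      ∧ contSub A B = ⊤ ∧ obsSub A C = ⊤ := by
  have hiso₁ : ∀ v, ‖sysOp A₁ B₁ C₁ D v‖ = ‖v‖ :=
    (norm_map_iff_adjoint_comp_self _).mpr hcons₁.1
  have hcoiso₁ : ∀ v, ‖adjoint (sysOp A₁ B₁ C₁ D) v‖ = ‖v‖ :=
    (norm_map_iff_adjoint_comp_self _).mpr (by rw [adjoint_adjoint]; exact hcons₁.2)
  obtain ⟨V, hA, hB, hC⟩ := exists_linearIsometry_intertwining hmom (denseRange_reach hcont)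
    (norm_reach_eq_of_passive_of_conservative hmom hpass hiso₁ hcoiso₁ hobs₁)
  exact ⟨(norm_map_iff_adjoint_comp_self _).mp
      (norm_sysOp_apply_of_intertwining V hA hB hC hiso₁),
    hcont, obsSub_eq_top_of_intertwining V hA hC hobs₁⟩
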